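/- Suppose probability measures P⁽⁰⁾,…,P⁽ᵀ⁾ over inputs satisfy the task-coverage condition: for every representation g in class G, the Schur complement matrices satisfy Σ̄_g⁽⁰⁾ ⪯ μ_X Σ̄_g⁽ᵗ⁾ for all t ∈ [T]. Let F★⁽ᵗ⁾ be the optimal linear heads, set 𝐅★^{1:T} = (1/T)Σ_t F★⁽ᵗ⁾ᵀF★⁽ᵗ⁾ and 𝐅★⁽⁰⁾ = F★⁽⁰⁾ᵀF★⁽⁰⁾, assume range(𝐅★⁽⁰⁾) ⊆ range(𝐅★^{1:T}), and define μ_F = ‖(𝐅★^{1:T})^{†/2} 𝐅★⁽⁰⁾ (𝐅★^{1:T})^{†/2}‖₂. Then for every g ∈ G: inf_F E⁽⁰⁾‖F g(X) − F★⁽⁰⁾ g★(X)‖₂² ≤ (μ_X μ_F / T) Σ_{t=1}^T inf_F E⁽ᵗ⁾‖F g(X) − F★⁽ᵗ⁾ g★(X)‖₂², i.e., the task-diversity condition holds at level ν with ν⁻¹ = μ_X μ_F. -/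

import Mathlib

/-!
Expanding the square in the stacked second-moment matrix `[[A, B], [Bᵀ, C]]` of `(g, g★)` and
completing it around `A = E[g gᵀ]`, the risk of a head `F` against `H` is
`tr(D A Dᵀ) + tr(H Σ̄ Hᵀ)` with `D = F - H Bᵀ A⁻¹` and `Σ̄ = C - Bᵀ A⁻¹ B`, so the best risk is
`tr(H Σ̄ Hᵀ) = tr(Σ̄ HᵀH)`. For the heads, the range condition makes `𝐅^{1:T} 𝐅^† 𝐅⁽⁰⁾ = 𝐅⁽⁰⁾`,
so conjugating `‖N‖ • 1 - N ⪰ 0`, where `N = S 𝐅⁽⁰⁾ S` and `S = (𝐅^{1:T})^{†/2}`, by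
`𝐅^{1:T} S` gives `𝐅⁽⁰⁾ ⪯ μ_F 𝐅^{1:T}`. Pairing this with `Σ̄⁽⁰⁾ ⪰ 0` (`tr(PQ) ≥ 0` for psd
`P, Q`), and task coverage with each `F⁽ᵗ⁾`, yields
`tr(Σ̄⁽⁰⁾ 𝐅⁽⁰⁾) ≤ μ_F tr(Σ̄⁽⁰⁾ 𝐅^{1:T}) ≤ (μ_X μ_F / T) Σₜ tr(Σ̄⁽ᵗ⁾ F⁽ᵗ⁾ᵀF⁽ᵗ⁾)`.
-/

open Matrix MeasureTheory
open scoped Matrix.Norms.L2Operator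

section CrossMoment

variable {𝓧 : Type*} [MeasurableSpace 𝓧] {μ : Measure 𝓧} {m n p q : Type*}

variable (μ) in
noncomputable def crossMoment (φ : 𝓧 → m → ℝ) (ψ : 𝓧 → n → ℝ) : Matrix m n ℝ :=
  of fun i j => ∫ x, φ x i * ψ x j ∂μ

lemma crossMoment_transpose (φ : 𝓧 → m → ℝ) (ψ : 𝓧 → n → ℝ) :
    (crossMoment μ φ ψ)ᵀ = crossMoment μ ψ φ := by
  ext i j
  simp only [crossMoment, transpose_apply, of_apply, mul_comm]

lemma crossMoment_sumElim (g : 𝓧 → m → ℝ) (h : 𝓧 → n → ℝ) :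
    crossMoment μ (fun x => Sum.elim (g x) (h x)) (fun x => Sum.elim (g x) (h x)) =
      fromBlocks (crossMoment μ g g) (crossMoment μ g h) (crossMoment μ h g)
        (crossMoment μ h h) := by
  ext (i | i) (j | j) <;> rfl

lemma integrable_sumElim_mul_sumElim {g : 𝓧 → m → ℝ} {h : 𝓧 → n → ℝ}
    (hgg : ∀ i j, Integrable (fun x => g x i * g x j) μ)
    (hgh : ∀ i j, Integrable (fun x => g x i * h x j) μ)
    (hhh : ∀ i j, Integrable (fun x => h x i * h x j) μ) :
    ∀ a b, Integrable (fun x => Sum.elim (g x) (h x) a * Sum.elim (g x) (h x) b) μ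
  | .inl i, .inl j => hgg i j
  | .inl i, .inr j => hgh i j
  | .inr i, .inl j => by simpa only [Sum.elim_inl, Sum.elim_inr, mul_comm] using hgh j i
  | .inr i, .inr j => hhh i j

variable [Fintype m] [Fintype n]

lemma dotProduct_mul_dotProduct {R : Type*} [CommSemiring R] (v a : m → R) (w b : n → R) :
    (v ⬝ᵥ a) * (w ⬝ᵥ b) = ∑ i, ∑ j, v i * w j * (a i * b j) := by
  simp only [dotProduct, Finset.sum_mul_sum]
  exact Finset.sum_congr rfl fun i _ => Finset.sum_congr rfl fun j _ => by ring

variable {φ : 𝓧 → m → ℝ} {ψ : 𝓧 → n → ℝ}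

lemma integrable_dotProduct_mul_dotProduct
    (h : ∀ i j, Integrable (fun x => φ x i * ψ x j) μ) (v : m → ℝ) (w : n → ℝ) :
    Integrable (fun x => (v ⬝ᵥ φ x) * (w ⬝ᵥ ψ x)) μ := by
  simp_rw [dotProduct_mul_dotProduct]
  exact integrable_finsetSum _ fun i _ =>
    integrable_finsetSum _ fun j _ => (h i j).const_mul _

lemma integral_dotProduct_mul_dotProduct
    (h : ∀ i j, Integrable (fun x => φ x i * ψ x j) μ) (v : m → ℝ) (w : n → ℝ) :
    ∫ x, (v ⬝ᵥ φ x) * (w ⬝ᵥ ψ x) ∂μ = v ⬝ᵥ (crossMoment μ φ ψ *ᵥ w) := by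
  simp_rw [dotProduct_mul_dotProduct]
  rw [integral_finsetSum _ fun i _ =>
    integrable_finsetSum _ fun j _ => (h i j).const_mul _]
  simp only [integral_finsetSum _ fun j _ => (h _ j).const_mul _, integral_const_mul,
    dotProduct, mulVec, crossMoment, of_apply, Finset.mul_sum]
  exact Finset.sum_congr rfl fun i _ => Finset.sum_congr rfl fun j _ => by ring

lemma crossMoment_mulVec_mulVec [Fintype p] [Fintype q]
    (h : ∀ i j, Integrable (fun x => φ x i * ψ x j) μ) (M : Matrix p m ℝ) (N : Matrix q n ℝ) :
    crossMoment μ (fun x => M *ᵥ φ x) (fun x => N *ᵥ ψ x) = M * crossMoment μ φ ψ * Nᵀ := by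
  ext k l
  rw [crossMoment, of_apply]
  exact (integral_dotProduct_mul_dotProduct h (M k) (N l)).trans <| by
    simp only [dotProduct, mulVec, mul_apply, transpose_apply, Finset.mul_sum, Finset.sum_mul]
    rw [Finset.sum_comm]
    exact Finset.sum_congr rfl fun j _ => Finset.sum_congr rfl fun i _ => by ring

lemma integral_sum_sq_eq_trace_crossMoment (h : ∀ i j, Integrable (fun x => φ x i * φ x j) μ) :
    ∫ x, ∑ i, φ x i ^ 2 ∂μ = trace (crossMoment μ φ φ) := by
  simp only [sq, integral_finsetSum _ fun i _ => h i i, trace, diag, crossMoment, of_apply]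

lemma posSemidef_crossMoment_self (h : ∀ i j, Integrable (fun x => φ x i * φ x j) μ) :
    (crossMoment μ φ φ).PosSemidef := by
  refine .of_dotProduct_mulVec_nonneg ?_ fun v => ?_
  · rw [IsHermitian, conjTranspose_eq_transpose_of_trivial, crossMoment_transpose]
  · rw [star_trivial, ← integral_dotProduct_mul_dotProduct h]
    exact integral_nonneg fun x => mul_self_nonneg _

end CrossMoment

lemma fromCols_mul_fromBlocks_mul_transpose {R m n p : Type*} [CommRing R] [Fintype m]
    [Fintype n] [DecidableEq m] {A : Matrix m m R} (hA : Aᵀ = A) (hdet : IsUnit A.det)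
    (B : Matrix m n R) (C : Matrix n n R) (F : Matrix p m R) (H : Matrix p n R) :
    fromCols F (-H) * fromBlocks A B Bᵀ C * (fromCols F (-H))ᵀ =
      (F - H * Bᵀ * A⁻¹) * A * (F - H * Bᵀ * A⁻¹)ᵀ + H * (C - Bᵀ * A⁻¹ * B) * Hᵀ := by
  have hAinv : A⁻¹ᵀ = A⁻¹ := by rw [transpose_nonsing_inv, hA]
  simp only [fromCols_mul_fromBlocks, transpose_fromCols, fromCols_mul_fromRows, transpose_sub,
    transpose_neg, transpose_mul, transpose_transpose, hAinv, Matrix.add_mul, Matrix.sub_mul,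
    Matrix.mul_sub, Matrix.neg_mul, Matrix.mul_neg, Matrix.mul_assoc,
    mul_nonsing_inv_cancel_left _ _ hdet, nonsing_inv_mul_cancel_left _ _ hdet]
  abel

section Risk

variable {𝓧 : Type*} [MeasurableSpace 𝓧] {μ : Measure 𝓧} {m n p : Type*}
  [Fintype m] [Fintype n] [Fintype p] {g : 𝓧 → m → ℝ} {h : 𝓧 → n → ℝ}

lemma integral_sum_sq_sub_mulVec
    (hgg : ∀ i j, Integrable (fun x => g x i * g x j) μ)
    (hgh : ∀ i j, Integrable (fun x => g x i * h x j) μ)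
    (hhh : ∀ i j, Integrable (fun x => h x i * h x j) μ) (F : Matrix p m ℝ) (H : Matrix p n ℝ) :
    ∫ x, ∑ i, ((F *ᵥ g x) i - (H *ᵥ h x) i) ^ 2 ∂μ =
      trace (fromCols F (-H) * fromBlocks (crossMoment μ g g) (crossMoment μ g h)
        (crossMoment μ g h)ᵀ (crossMoment μ h h) * (fromCols F (-H))ᵀ) := by
  have hstack := integrable_sumElim_mul_sumElim hgg hgh hhh
  have hpt : ∀ x i, (F *ᵥ g x) i - (H *ᵥ h x) i =
      (fromCols F (-H) *ᵥ Sum.elim (g x) (h x)) i := fun x i => by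
    rw [fromCols_mulVec_sumElim, neg_mulVec, ← sub_eq_add_neg, Pi.sub_apply]
  simp_rw [hpt]
  rw [integral_sum_sq_eq_trace_crossMoment
      (φ := fun x => fromCols F (-H) *ᵥ Sum.elim (g x) (h x))
      (fun i j => integrable_dotProduct_mul_dotProduct hstack _ _),
    crossMoment_mulVec_mulVec hstack, crossMoment_sumElim, crossMoment_transpose]

variable [DecidableEq m]

theorem iInf_integral_sum_sq_sub_mulVec
    (hgg : ∀ i j, Integrable (fun x => g x i * g x j) μ)
    (hgh : ∀ i j, Integrable (fun x => g x i * h x j) μ)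
    (hhh : ∀ i j, Integrable (fun x => h x i * h x j) μ)
    (hdet : IsUnit (crossMoment μ g g).det) (H : Matrix p n ℝ) :
    ⨅ F : Matrix p m ℝ, ∫ x, ∑ i, ((F *ᵥ g x) i - (H *ᵥ h x) i) ^ 2 ∂μ =
      trace (H * (crossMoment μ h h -
        crossMoment μ h g * (crossMoment μ g g)⁻¹ * crossMoment μ g h) * Hᵀ) := by
  set A := crossMoment μ g g
  set B := crossMoment μ g h
  have hrisk : ∀ F : Matrix p m ℝ, ∫ x, ∑ i, ((F *ᵥ g x) i - (H *ᵥ h x) i) ^ 2 ∂μ =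
      trace ((F - H * Bᵀ * A⁻¹) * A * (F - H * Bᵀ * A⁻¹)ᵀ) +
        trace (H * (crossMoment μ h h - crossMoment μ h g * A⁻¹ * B) * Hᵀ) := fun F => by
    rw [integral_sum_sq_sub_mulVec hgg hgh hhh,
      fromCols_mul_fromBlocks_mul_transpose (crossMoment_transpose g g) hdet, trace_add,
      crossMoment_transpose]
  refine IsGLB.ciInf_eq (IsLeast.isGLB ⟨⟨H * Bᵀ * A⁻¹, ?_⟩, ?_⟩)
  · simp only [hrisk, sub_self, Matrix.zero_mul, trace_zero, zero_add]
  · rintro _ ⟨F, rfl⟩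
    refine (le_add_of_nonneg_left ?_).trans_eq (hrisk F).symm
    simpa only [conjTranspose_eq_transpose_of_trivial] using
      ((posSemidef_crossMoment_self hgg).mul_mul_conjTranspose_same _).trace_nonneg

theorem posSemidef_schurComplement_crossMoment
    (hgg : ∀ i j, Integrable (fun x => g x i * g x j) μ)
    (hgh : ∀ i j, Integrable (fun x => g x i * h x j) μ)
    (hhh : ∀ i j, Integrable (fun x => h x i * h x j) μ)
    (hdet : IsUnit (crossMoment μ g g).det) :
    (crossMoment μ h h -
      crossMoment μ h g * (crossMoment μ g g)⁻¹ * crossMoment μ g h).PosSemidef := by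
  have hA := posSemidef_crossMoment_self hgg
  have := invertibleOfIsUnitDet _ hdet
  have hstack := posSemidef_crossMoment_self (integrable_sumElim_mul_sumElim hgg hgh hhh)
  rw [crossMoment_sumElim, ← crossMoment_transpose g h] at hstack
  rw [← crossMoment_transpose g h]
  simpa only [conjTranspose_eq_transpose_of_trivial] using
    (PosDef.fromBlocks₁₁ _ _ (hA.posDef_iff_isUnit.mpr ((isUnit_iff_isUnit_det _).mpr hdet))).mp
      (by simpa only [conjTranspose_eq_transpose_of_trivial] using hstack)

end Risk

section Loewner

variable {n : Type*} [Fintype n]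

theorem Matrix.PosSemidef.trace_mul_nonneg {P Q : Matrix n n ℝ} (hP : P.PosSemidef)
    (hQ : Q.PosSemidef) : 0 ≤ trace (P * Q) := by
  classical
  open scoped MatrixOrder in
  obtain ⟨R, rfl⟩ := CStarAlgebra.nonneg_iff_eq_star_mul_self.mp hQ.nonneg
  rw [star_eq_conjTranspose, ← Matrix.mul_assoc, trace_mul_comm, ← Matrix.mul_assoc]
  exact (hP.mul_mul_conjTranspose_same R).trace_nonneg

theorem Matrix.PosSemidef.trace_mul_le {P Q R : Matrix n n ℝ} {c : ℝ} (hP : P.PosSemidef)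
    (h : (c • Q - R).PosSemidef) : trace (P * R) ≤ c * trace (P * Q) := by
  have := hP.trace_mul_nonneg h
  rw [Matrix.mul_sub, trace_sub, Matrix.mul_smul, trace_smul, smul_eq_mul] at this
  linarith

lemma trace_mul_mul_transpose_le {m : Type*} [Fintype m] {Q R : Matrix n n ℝ} {c : ℝ}
    (h : (c • Q - R).PosSemidef) (F : Matrix m n ℝ) :
    trace (F * R * Fᵀ) ≤ c * trace (F * Q * Fᵀ) := by
  have := (h.mul_mul_conjTranspose_same F).trace_nonneg
  rw [conjTranspose_eq_transpose_of_trivial, Matrix.mul_sub, Matrix.sub_mul, trace_sub,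
    Matrix.mul_smul, Matrix.smul_mul, trace_smul, smul_eq_mul] at this
  linarith

lemma mul_mul_eq_of_range_le {R m p : Type*} [CommSemiring R] [Fintype m] [Fintype p]
    {A : Matrix m n R} {X : Matrix n m R} {B : Matrix m p R} (hA : A * X * A = A)
    (hB : LinearMap.range B.mulVecLin ≤ LinearMap.range A.mulVecLin) : A * X * B = B := by
  refine ext_iff_mulVec.mpr fun v => ?_
  obtain ⟨w, hw⟩ := hB ⟨v, rfl⟩
  simp only [mulVecLin_apply] at hw
  rw [← mulVec_mulVec, ← hw, mulVec_mulVec, hA]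

variable [DecidableEq n]

lemma dotProduct_mulVec_le_l2_opNorm_mul (N : Matrix n n ℝ) (u : n → ℝ) :
    u ⬝ᵥ (N *ᵥ u) ≤ ‖N‖ * (u ⬝ᵥ u) := by
  have hu : u ⬝ᵥ u = ‖WithLp.toLp 2 u‖ ^ 2 := by
    rw [← real_inner_self_eq_norm_sq, EuclideanSpace.inner_toLp_toLp, star_trivial]
  calc u ⬝ᵥ (N *ᵥ u) = inner ℝ (WithLp.toLp 2 u) (WithLp.toLp 2 (N *ᵥ u)) := by
        rw [EuclideanSpace.inner_toLp_toLp, star_trivial, dotProduct_comm]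
    _ ≤ ‖WithLp.toLp 2 u‖ * ‖WithLp.toLp 2 (N *ᵥ u)‖ := real_inner_le_norm _ _
    _ ≤ ‖WithLp.toLp 2 u‖ * (‖N‖ * ‖WithLp.toLp 2 u‖) :=
        mul_le_mul_of_nonneg_left (N.l2_opNorm_mulVec _) (norm_nonneg _)
    _ = ‖N‖ * (u ⬝ᵥ u) := by rw [hu]; ring

lemma posSemidef_l2_opNorm_smul_one_sub {N : Matrix n n ℝ} (hN : N.IsHermitian) :
    (‖N‖ • (1 : Matrix n n ℝ) - N).PosSemidef := by
  refine .of_dotProduct_mulVec_nonneg ((isHermitian_one.smul (.all _)).sub hN) fun u => ?_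
  rw [star_trivial, sub_mulVec, smul_mulVec, one_mulVec, dotProduct_sub, dotProduct_smul,
    smul_eq_mul, sub_nonneg]
  exact dotProduct_mulVec_le_l2_opNorm_mul N u

theorem posSemidef_l2_opNorm_smul_sub_of_range_le {A B S : Matrix n n ℝ} (hA : A.IsHermitian)
    (hB : B.IsHermitian) (hS : S.IsHermitian) (hAS : A * (S * S) * A = A)
    (hrange : LinearMap.range B.mulVecLin ≤ LinearMap.range A.mulVecLin) :
    (‖S * B * S‖ • A - B).PosSemidef := by
  have hAB : A * (S * (S * B)) = B := by
    simpa only [Matrix.mul_assoc] using mul_mul_eq_of_range_le hAS hrange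
  have hBA : B * (S * (S * A)) = B := by
    simpa only [conjTranspose_mul, hA.eq, hB.eq, hS.eq, Matrix.mul_assoc] using
      congrArg conjTranspose hAB
  have hSBS : (S * B * S).IsHermitian := by
    simpa only [hS.eq] using isHermitian_conjTranspose_mul_mul S hB
  convert (posSemidef_l2_opNorm_smul_one_sub hSBS).mul_mul_conjTranspose_same (A * S) using 1
  simp only [conjTranspose_mul, hA.eq, hS.eq, Matrix.mul_sub, Matrix.sub_mul, Matrix.mul_smul,
    Matrix.smul_mul, Matrix.mul_one, Matrix.mul_assoc, hBA, hAB]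
  rw [← Matrix.mul_assoc S S A, ← Matrix.mul_assoc A, hAS]

end Loewner

theorem task_coverage_implies_task_diversity_general
    {𝓧 : Type*} [MeasurableSpace 𝓧] {T dY r : ℕ}
    (P : Fin (T + 1) → Measure 𝓧)
    (G : Set (𝓧 → Fin r → ℝ)) (gstar : 𝓧 → Fin r → ℝ)
    (Fstar : Fin (T + 1) → Matrix (Fin dY) (Fin r) ℝ)
    -- the Schur complement matrices Σ̄_g⁽ᵗ⁾ of E⁽ᵗ⁾[g g ᵀ] in the stacked covariance of (g, g★)
    (Sbar : Fin (T + 1) → (𝓧 → Fin r → ℝ) → Matrix (Fin r) (Fin r) ℝ)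
    (hSbar : ∀ t, ∀ g ∈ G, Sbar t g =
      (Matrix.of fun i j => ∫ x, gstar x i * gstar x j ∂(P t))
        - (Matrix.of fun i j => ∫ x, gstar x i * g x j ∂(P t))
          * (Matrix.of fun i j => ∫ x, g x i * g x j ∂(P t))⁻¹
          * (Matrix.of fun i j => ∫ x, g x i * gstar x j ∂(P t)))
    (hinv : ∀ t, ∀ g ∈ G, IsUnit (Matrix.of fun i j => ∫ x, g x i * g x j ∂(P t)).det)
    (hint1 : ∀ t, ∀ g ∈ G, ∀ i j, Integrable (fun x => g x i * g x j) (P t))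
    (hint2 : ∀ t, ∀ g ∈ G, ∀ i j, Integrable (fun x => g x i * gstar x j) (P t))
    (hint3 : ∀ t, ∀ i j, Integrable (fun x => gstar x i * gstar x j) (P t))
    -- task-coverage condition at level μX
    (μX : ℝ)
    (hTC : ∀ g ∈ G, ∀ t : Fin T, (μX • Sbar t.succ g - Sbar 0 g).PosSemidef)
    (bF0 bF1T : Matrix (Fin r) (Fin r) ℝ)
    (hbF0 : bF0 = (Fstar 0)ᵀ * Fstar 0)
    (hbF1T : bF1T = (T : ℝ)⁻¹ • ∑ t : Fin T, (Fstar t.succ)ᵀ * Fstar t.succ)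
    (hrange : LinearMap.range bF0.mulVecLin ≤ LinearMap.range bF1T.mulVecLin)
    -- Fp is the Moore–Penrose pseudoinverse of 𝐅★^{1:T}, S its psd square root
    (Fp S : Matrix (Fin r) (Fin r) ℝ)
    (hFp1 : bF1T * Fp * bF1T = bF1T)
    (hS : S.PosSemidef) (hSS : S * S = Fp)
    (μF : ℝ) (hμF : μF = ‖S * bF0 * S‖) :
    ∀ g ∈ G,
      (⨅ F : Matrix (Fin dY) (Fin r) ℝ,
          ∫ x, ∑ i, (F.mulVec (g x) i - (Fstar 0).mulVec (gstar x) i) ^ 2 ∂(P 0))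
        ≤ (μX * μF / T) * ∑ t : Fin T,
            ⨅ F : Matrix (Fin dY) (Fin r) ℝ,
              ∫ x, ∑ i, (F.mulVec (g x) i - (Fstar t.succ).mulVec (gstar x) i) ^ 2
                ∂(P t.succ) := by
  intro g hg
  have hrisk : ∀ t, (⨅ F : Matrix (Fin dY) (Fin r) ℝ,
      ∫ x, ∑ i, (F.mulVec (g x) i - (Fstar t).mulVec (gstar x) i) ^ 2 ∂(P t)) =
        trace (Fstar t * Sbar t g * (Fstar t)ᵀ) := fun t => by
    rw [hSbar t g hg]
    exact iInf_integral_sum_sq_sub_mulVec (hint1 t g hg) (hint2 t g hg) (hint3 t) (hinv t g hg) _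
  have hS0 : (Sbar 0 g).PosSemidef := hSbar 0 g hg ▸
    posSemidef_schurComplement_crossMoment (hint1 0 g hg) (hint2 0 g hg) (hint3 0) (hinv 0 g hg)
  have hgram (F : Matrix (Fin dY) (Fin r) ℝ) : (Fᵀ * F).PosSemidef := by
    simpa only [conjTranspose_eq_transpose_of_trivial] using posSemidef_conjTranspose_mul_self F
  have hbF1T_psd : bF1T.PosSemidef :=
    hbF1T ▸ (posSemidef_sum _ fun t _ => hgram _).smul (by positivity)
  have hcov : (μF • bF1T - bF0).PosSemidef :=
    hμF ▸ posSemidef_l2_opNorm_smul_sub_of_range_le hbF1T_psd.isHermitian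
      (hbF0 ▸ hgram _).isHermitian hS.isHermitian (hSS ▸ hFp1) hrange
  have hμF0 : 0 ≤ μF / T := div_nonneg (hμF ▸ norm_nonneg _) T.cast_nonneg
  have hcyc (F : Matrix (Fin dY) (Fin r) ℝ) :
      trace (F * Sbar 0 g * Fᵀ) = trace (Sbar 0 g * (Fᵀ * F)) := by
    rw [trace_mul_cycle, trace_mul_comm]
  simp_rw [hrisk]
  calc trace (Fstar 0 * Sbar 0 g * (Fstar 0)ᵀ) = trace (Sbar 0 g * bF0) := by rw [hbF0, hcyc]
    _ ≤ μF * trace (Sbar 0 g * bF1T) := hS0.trace_mul_le hcov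
    _ = μF / T * ∑ t : Fin T, trace (Fstar t.succ * Sbar 0 g * (Fstar t.succ)ᵀ) := by
        rw [hbF1T, Matrix.mul_smul, trace_smul, Matrix.mul_sum, trace_sum, smul_eq_mul]
        simp only [hcyc]
        ring
    _ ≤ μF / T * ∑ t : Fin T, μX * trace (Fstar t.succ * Sbar t.succ g * (Fstar t.succ)ᵀ) :=
        mul_le_mul_of_nonneg_left
          (Finset.sum_le_sum fun t _ => trace_mul_mul_transpose_le (hTC g hg t) _) hμF0
    _ = _ := by rw [← Finset.mul_sum]; ring

/-- Task coverage implies task diversity: if for every `g ∈ G` the Schur complements of the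
stacked second-moment matrices satisfy `Σ̄_g⁽⁰⁾ ⪯ μ_X Σ̄_g⁽ᵗ⁾` for every source task `t`,
and the optimal heads satisfy the range condition with head-coverage coefficient
`μ_F = ‖(𝐅★^{1:T})^{†/2} 𝐅★⁽⁰⁾ (𝐅★^{1:T})^{†/2}‖₂`, then for every `g ∈ G`,
`inf_F E⁽⁰⁾‖F g(X) − F★⁽⁰⁾ g★(X)‖² ≤ (μ_X μ_F / T) Σ_t inf_F E⁽ᵗ⁾‖F g(X) − F★⁽ᵗ⁾ g★(X)‖²`. -/
theorem task_coverage_implies_task_diversity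
    {𝓧 : Type*} [MeasurableSpace 𝓧] {T dY r : ℕ} (hT : 0 < T)
    (P : Fin (T + 1) → Measure 𝓧) [∀ t, IsProbabilityMeasure (P t)]
    (G : Set (𝓧 → Fin r → ℝ)) (gstar : 𝓧 → Fin r → ℝ)
    (Fstar : Fin (T + 1) → Matrix (Fin dY) (Fin r) ℝ)
    -- the Schur complement matrices Σ̄_g⁽ᵗ⁾ of E⁽ᵗ⁾[g g ᵀ] in the stacked covariance of (g, g★)
    (Sbar : Fin (T + 1) → (𝓧 → Fin r → ℝ) → Matrix (Fin r) (Fin r) ℝ)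
    (hSbar : ∀ t, ∀ g ∈ G, Sbar t g =
      (Matrix.of fun i j => ∫ x, gstar x i * gstar x j ∂(P t))
        - (Matrix.of fun i j => ∫ x, gstar x i * g x j ∂(P t))
          * (Matrix.of fun i j => ∫ x, g x i * g x j ∂(P t))⁻¹
          * (Matrix.of fun i j => ∫ x, g x i * gstar x j ∂(P t)))
    (hinv : ∀ t, ∀ g ∈ G, IsUnit (Matrix.of fun i j => ∫ x, g x i * g x j ∂(P t)).det)
    (hint1 : ∀ t, ∀ g ∈ G, ∀ i j, Integrable (fun x => g x i * g x j) (P t))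
    (hint2 : ∀ t, ∀ g ∈ G, ∀ i j, Integrable (fun x => g x i * gstar x j) (P t))
    (hint3 : ∀ t, ∀ i j, Integrable (fun x => gstar x i * gstar x j) (P t))
    -- task-coverage condition at level μX
    (μX : ℝ) (hμX : 0 < μX)
    (hTC : ∀ g ∈ G, ∀ t : Fin T, (μX • Sbar t.succ g - Sbar 0 g).PosSemidef)
    (bF0 bF1T : Matrix (Fin r) (Fin r) ℝ)
    (hbF0 : bF0 = (Fstar 0)ᵀ * Fstar 0)
    (hbF1T : bF1T = (T : ℝ)⁻¹ • ∑ t : Fin T, (Fstar t.succ)ᵀ * Fstar t.succ)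
    (hrange : LinearMap.range bF0.mulVecLin ≤ LinearMap.range bF1T.mulVecLin)
    -- Fp is the Moore–Penrose pseudoinverse of 𝐅★^{1:T}, S its psd square root
    (Fp S : Matrix (Fin r) (Fin r) ℝ)
    (hFp1 : bF1T * Fp * bF1T = bF1T) (hFp2 : Fp * bF1T * Fp = Fp)
    (hFp3 : (bF1T * Fp)ᵀ = bF1T * Fp) (hFp4 : (Fp * bF1T)ᵀ = Fp * bF1T)
    (hS : S.PosSemidef) (hSS : S * S = Fp)
    (μF : ℝ) (hμF : μF = ‖S * bF0 * S‖) :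
    ∀ g ∈ G,
      (⨅ F : Matrix (Fin dY) (Fin r) ℝ,
          ∫ x, ∑ i, (F.mulVec (g x) i - (Fstar 0).mulVec (gstar x) i) ^ 2 ∂(P 0))
        ≤ (μX * μF / T) * ∑ t : Fin T,
            ⨅ F : Matrix (Fin dY) (Fin r) ℝ,
              ∫ x, ∑ i, (F.mulVec (g x) i - (Fstar t.succ).mulVec (gstar x) i) ^ 2
                ∂(P t.succ) :=
  task_coverage_implies_task_diversity_general P G gstar Fstar Sbar hSbar hinv hint1 hint2 hint3 μX
    hTC bF0 bF1T hbF0 hbF1T hrange Fp S hFp1 hS hSS μF hμF
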